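/- arXiv:1205.6844 — 2 statements merged into one kernel-verified Lean document; each statement's English description precedes it below -/
import Mathlib

section
/- For every σ > σ₀ there exists ζ ≥ 0 with v_σ(ζ) < 0; that is, the regular solution v_σ cannot be nonnegative on all of [0,∞). -/
open Filter Set

/-- A regular solution of the singular ODE
`-ζ·v'' - v'/(m-2) + B·ζ^{m/(m-2)}·v = σ·v` on `(0,∞)`:
continuously differentiable on `[0,∞)`, twice continuously differentiable on
`(0,∞)`, and normalized by `v 0 = 1`. -/
def RegSol (m B σ : ℝ) (v : ℝ → ℝ) : Prop :=
  ContDiffOn ℝ 1 v (Set.Ici 0) ∧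
  ContDiffOn ℝ 2 v (Set.Ioi 0) ∧
  (∀ ζ : ℝ, 0 < ζ →
    -ζ * deriv (deriv v) ζ - deriv v ζ / (m - 2)
      + B * ζ ^ (m / (m - 2)) * v ζ = σ * v ζ) ∧
  v 0 = 1

/-! If `v_σ ≥ 0` with `σ > σ₀`, the weighted Wronskian `W = ζ^α (v₀' v_σ - v₀ v_σ')`,
`α = 1/(m-2)`, vanishes at `0`, is nondecreasing and is strictly positive near `0`, so
`W ≥ δ > 0` far out. There `(v_σ/v₀)' = -ζ^(-α) W / v₀² ≤ -δ ζ^(-α)` once `v₀ ≤ 1`, and since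
`α < 1` this forces `v_σ/v₀ → -∞`, contradicting `v_σ ≥ 0`. -/

namespace RegSol

variable {m B σ : ℝ} {v : ℝ → ℝ}

lemma hasDerivAt (h : RegSol m B σ v) {ζ : ℝ} (hζ : 0 < ζ) :
    HasDerivAt v (deriv v ζ) ζ :=
  ((h.2.1.differentiableOn (by norm_num)) ζ hζ).differentiableAt
    (Ioi_mem_nhds hζ) |>.hasDerivAt

lemma hasDerivAt_deriv (h : RegSol m B σ v) {ζ : ℝ} (hζ : 0 < ζ) :
    HasDerivAt (deriv v) (deriv (deriv v) ζ) ζ := by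
  have hv' : ContDiffOn ℝ 1 (deriv v) (Ioi 0) :=
    (h.2.1.derivWithin (uniqueDiffOn_Ioi 0) (by norm_num)).congr
      fun x hx => (derivWithin_of_isOpen isOpen_Ioi hx).symm
  exact ((hv'.differentiableOn (by norm_num)) ζ hζ).differentiableAt
    (Ioi_mem_nhds hζ) |>.hasDerivAt

end RegSol

open scoped Topology

/-- For `α = 1/(m-2)` the equation is `-ζ^(1-α) (ζ^α v')' + b v = σ v`, hence the weight `ζ^α`. -/
noncomputable def weightedWronskian (α : ℝ) (u v : ℝ → ℝ) (x : ℝ) : ℝ :=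
  x ^ α * (deriv u x * v x - u x * deriv v x)

lemma tendsto_weightedWronskian_nhdsGT_zero {α : ℝ} (hα : 0 < α) {u v : ℝ → ℝ}
    (hu : ContDiffOn ℝ 1 u (Ici 0)) (hv : ContDiffOn ℝ 1 v (Ici 0)) :
    Tendsto (weightedWronskian α u v) (𝓝[>] 0) (𝓝 0) := by
  set g : ℝ → ℝ := fun x => derivWithin u (Ici 0) x * v x - u x * derivWithin v (Ici 0) x
  have hg : ContinuousWithinAt g (Ici 0) 0 :=
    (((hu.continuousOn_derivWithin (uniqueDiffOn_Ici 0) le_rfl) 0 self_mem_Ici).mul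
      (hv.continuousOn 0 self_mem_Ici)).sub
    ((hu.continuousOn 0 self_mem_Ici).mul
      ((hv.continuousOn_derivWithin (uniqueDiffOn_Ici 0) le_rfl) 0 self_mem_Ici))
  have hpow : Tendsto (fun x : ℝ => x ^ α) (𝓝[>] 0) (𝓝 0) := by
    simpa [Real.zero_rpow hα.ne'] using
      (Real.continuousAt_rpow_const 0 α (Or.inr hα.le)).tendsto.mono_left nhdsWithin_le_nhds
  have hlim := hpow.mul (hg.tendsto.mono_left (nhdsWithin_mono 0 Ioi_subset_Ici_self))
  rw [zero_mul] at hlim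
  refine hlim.congr' ?_
  filter_upwards [self_mem_nhdsWithin] with x (hx : 0 < x)
  simp only [g, weightedWronskian, derivWithin_of_mem_nhds (Ici_mem_nhds hx)]

section TwoSolutions

variable {m B σ₀ σ : ℝ} {v₀ v : ℝ → ℝ}

lemma hasDerivAt_weightedWronskian (h₀ : RegSol m B σ₀ v₀) (h : RegSol m B σ v)
    {ζ : ℝ} (hζ : 0 < ζ) :
    HasDerivAt (weightedWronskian (1 / (m - 2)) v₀ v)
      ((σ - σ₀) * ζ ^ (1 / (m - 2) - 1) * (v₀ ζ * v ζ)) ζ := by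
  have hpow : HasDerivAt (fun x : ℝ => x ^ (1 / (m - 2)))
      (1 / (m - 2) * ζ ^ (1 / (m - 2) - 1)) ζ :=
    Real.hasDerivAt_rpow_const (Or.inl hζ.ne')
  have hdiff : HasDerivAt (fun x => deriv v₀ x * v x - v₀ x * deriv v x)
      (deriv (deriv v₀) ζ * v ζ - v₀ ζ * deriv (deriv v) ζ) ζ :=
    (((h₀.hasDerivAt_deriv hζ).mul (h.hasDerivAt hζ)).sub
      ((h₀.hasDerivAt hζ).mul (h.hasDerivAt_deriv hζ))).congr_deriv (by ring)
  refine (hpow.mul hdiff).congr_deriv ?_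
  have hsplit : ζ ^ (1 / (m - 2)) = ζ ^ (1 / (m - 2) - 1) * ζ := by
    rw [← Real.rpow_add_one hζ.ne', sub_add_cancel]
  rw [hsplit]
  linear_combination (ζ ^ (1 / (m - 2) - 1) * v₀ ζ) * h.2.2.1 ζ hζ
    - (ζ ^ (1 / (m - 2) - 1) * v ζ) * h₀.2.2.1 ζ hζ

lemma monotoneOn_weightedWronskian (h₀ : RegSol m B σ₀ v₀) (h : RegSol m B σ v)
    (hσ : σ₀ ≤ σ) (hv₀ : ∀ x, 0 < x → 0 ≤ v₀ x) (hv : ∀ x, 0 < x → 0 ≤ v x) :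
    MonotoneOn (weightedWronskian (1 / (m - 2)) v₀ v) (Ioi 0) := by
  refine monotoneOn_of_hasDerivWithinAt_nonneg (f' := fun x => (σ - σ₀) * x ^ (1 / (m - 2) - 1) * (v₀ x * v x)) (convex_Ioi 0)
    (fun x hx => (hasDerivAt_weightedWronskian h₀ h hx).continuousAt.continuousWithinAt)
    (fun x hx => ?_) (fun x hx => ?_) <;> simp only [interior_Ioi] at hx ⊢
  · exact (hasDerivAt_weightedWronskian h₀ h hx).hasDerivWithinAt
  · have := Real.rpow_nonneg hx.le (1 / (m - 2) - 1)
    have := hv₀ x hx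
    have := hv x hx
    have : 0 ≤ σ - σ₀ := sub_nonneg.2 hσ
    positivity

lemma weightedWronskian_nonneg (hm : 2 < m) (h₀ : RegSol m B σ₀ v₀) (h : RegSol m B σ v)
    (hσ : σ₀ ≤ σ) (hv₀ : ∀ x, 0 < x → 0 ≤ v₀ x) (hv : ∀ x, 0 < x → 0 ≤ v x)
    {x : ℝ} (hx : 0 < x) : 0 ≤ weightedWronskian (1 / (m - 2)) v₀ v x := by
  refine le_of_tendsto (tendsto_weightedWronskian_nhdsGT_zero
    (one_div_pos.2 (sub_pos.2 hm)) h₀.1 h.1) ?_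
  filter_upwards [Ioc_mem_nhdsGT hx] with y hy
  exact monotoneOn_weightedWronskian h₀ h hσ hv₀ hv hy.1 hx hy.2

end TwoSolutions

lemma exists_weightedWronskian_pos {m B σ₀ σ : ℝ} {v₀ v : ℝ → ℝ} (hm : 2 < m)
    (h₀ : RegSol m B σ₀ v₀) (h : RegSol m B σ v) (hσ : σ₀ < σ)
    (hv₀ : ∀ x, 0 < x → 0 < v₀ x) (hv : ∀ x, 0 < x → 0 ≤ v x) :
    ∃ ε > 0, 0 < weightedWronskian (1 / (m - 2)) v₀ v ε := by
  have hnear : ∀ᶠ x in 𝓝[>] 0, 0 < v x :=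
    ((h.1.continuousOn 0 self_mem_Ici).mono Ioi_subset_Ici_self).eventually
      (eventually_gt_nhds (by rw [h.2.2.2]; exact one_pos))
  obtain ⟨ε, hε, hsub⟩ := mem_nhdsGT_iff_exists_Ioo_subset.1 hnear
  have hε0 : 0 < ε := hε
  have hstrict : StrictMonoOn (weightedWronskian (1 / (m - 2)) v₀ v) (Ioo 0 ε) := by
    refine strictMonoOn_of_hasDerivWithinAt_pos
      (f' := fun x => (σ - σ₀) * x ^ (1 / (m - 2) - 1) * (v₀ x * v x)) (convex_Ioo 0 ε)
      (fun x hx => (hasDerivAt_weightedWronskian h₀ h hx.1).continuousAt.continuousWithinAt)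
      (fun x hx => ?_) (fun x hx => ?_) <;> simp only [interior_Ioo] at hx ⊢
    · exact (hasDerivAt_weightedWronskian h₀ h hx.1).hasDerivWithinAt
    · have := Real.rpow_pos_of_pos hx.1 (1 / (m - 2) - 1)
      have := hv₀ x hx.1
      have : 0 < v x := hsub hx
      have : 0 < σ - σ₀ := sub_pos.2 hσ
      positivity
  refine ⟨ε / 2, by positivity, ?_⟩
  calc 0 ≤ weightedWronskian (1 / (m - 2)) v₀ v (ε / 4) :=
        weightedWronskian_nonneg hm h₀ h hσ.le (fun x hx => (hv₀ x hx).le) hv (by positivity)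
    _ < weightedWronskian (1 / (m - 2)) v₀ v (ε / 2) :=
        hstrict ⟨by positivity, by linarith⟩ ⟨by positivity, by linarith⟩ (by linarith)

lemma tendsto_atBot_of_hasDerivAt_le_neg_rpow {f f' : ℝ → ℝ} {a c α : ℝ} (ha : 0 < a)
    (hc : 0 < c) (hα : α < 1) (hf : ∀ x, a ≤ x → HasDerivAt f (f' x) x)
    (hf' : ∀ x, a ≤ x → f' x ≤ -c * x ^ (-α)) : Tendsto f atTop atBot := by
  set β := 1 - α
  have hβ : 0 < β := sub_pos.2 hα
  have hg : ∀ x, a ≤ x → HasDerivAt (fun x => f x + c / β * x ^ β) (f' x + c * x ^ (-α)) x :=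
    fun x hx => ((hf x hx).add ((Real.hasDerivAt_rpow_const
      (Or.inl (ha.trans_le hx).ne')).const_mul (c / β))).congr_deriv (by
        rw [show β - 1 = -α by ring]; field_simp)
  have hanti : AntitoneOn (fun x => f x + c / β * x ^ β) (Ici a) := by
    refine antitoneOn_of_hasDerivWithinAt_nonpos (f' := fun x => f' x + c * x ^ (-α))
      (convex_Ici a)
      (fun x hx => (hg x hx).continuousAt.continuousWithinAt)
      (fun x hx => ?_) (fun x hx => ?_) <;> simp only [interior_Ici, mem_Ioi] at hx ⊢
    · exact (hg x hx.le).hasDerivWithinAt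
    · linarith [hf' x hx.le]
  refine tendsto_atBot_mono' atTop ?_ (tendsto_atBot_add_const_left atTop (f a + c / β * a ^ β)
    (tendsto_neg_atTop_atBot.comp ((tendsto_rpow_atTop hβ).const_mul_atTop (div_pos hc hβ))))
  filter_upwards [eventually_ge_atTop a] with x hx
  have := hanti self_mem_Ici hx hx
  simp only [Function.comp_apply]
  linarith

lemma exists_neg_of_le_weightedWronskian {α δ a : ℝ} {u v : ℝ → ℝ} (hα : α < 1)
    (ha : 0 < a) (hδ : 0 < δ) (hu : ∀ x, a ≤ x → HasDerivAt u (deriv u x) x)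
    (hv : ∀ x, a ≤ x → HasDerivAt v (deriv v x) x) (hu_pos : ∀ x, a ≤ x → 0 < u x)
    (hu_le : ∀ x, a ≤ x → u x ≤ 1) (hW : ∀ x, a ≤ x → δ ≤ weightedWronskian α u v x) :
    ∃ x, a ≤ x ∧ v x < 0 := by
  have hquot : Tendsto (fun x => v x / u x) atTop atBot := by
    refine tendsto_atBot_of_hasDerivAt_le_neg_rpow ha hδ hα
      (fun x hx => (hv x hx).div (hu x hx) (hu_pos x hx).ne') fun x hx => ?_
    have hx0 : 0 < x := ha.trans_le hx
    have hpow : 0 < x ^ α := Real.rpow_pos_of_pos hx0 α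
    set D := deriv u x * v x - u x * deriv v x
    have hD : δ * x ^ (-α) ≤ D := by
      rw [Real.rpow_neg hx0.le, ← div_eq_mul_inv, div_le_iff₀ hpow, mul_comm]
      exact hW x hx
    have hsq : 0 < u x ^ 2 := pow_pos (hu_pos x hx) 2
    have hsq_le : u x ^ 2 ≤ 1 := pow_le_one₀ (hu_pos x hx).le (hu_le x hx)
    calc (deriv v x * u x - v x * deriv u x) / u x ^ 2 = -(D / u x ^ 2) := by ring
      _ ≤ -D := neg_le_neg (le_div_self (hD.trans' (by positivity)) hsq hsq_le)
      _ ≤ -δ * x ^ (-α) := by linarith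
  obtain ⟨x, hx, hxa⟩ := ((hquot.eventually (eventually_lt_atBot 0)).and
    (eventually_ge_atTop a)).exists
  exact ⟨x, hxa, lt_of_not_ge fun h => (div_nonneg h (hu_pos x hxa).le).not_gt hx⟩

theorem stmt14_general (m B σ₀ : ℝ) (hm : 3 < m)
    (v₀ : ℝ → ℝ) (h₀ : RegSol m B σ₀ v₀)
    (hpos : ∀ ζ : ℝ, 0 ≤ ζ → 0 < v₀ ζ)
    (hdecay : Filter.Tendsto v₀ Filter.atTop (nhds 0)) :
    ∀ σ : ℝ, σ₀ < σ → ∀ v : ℝ → ℝ, RegSol m B σ v →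
      ∃ ζ : ℝ, 0 ≤ ζ ∧ v ζ < 0 := by
  intro σ hσ v h
  by_contra! hv
  have hv₀ : ∀ x, 0 < x → 0 < v₀ x := fun x hx => hpos x hx.le
  obtain ⟨ε, hε, hWε⟩ := exists_weightedWronskian_pos (by linarith) h₀ h hσ hv₀
    fun x hx => hv x hx.le
  obtain ⟨N, hN⟩ := eventually_atTop.1 (hdecay.eventually (eventually_le_nhds one_pos))
  have ha : 0 < max N ε := lt_max_of_lt_right hε
  obtain ⟨x, hxa, hvx⟩ := exists_neg_of_le_weightedWronskian
    ((div_lt_one (by linarith)).2 (by linarith)) ha hWε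
    (fun x hx => h₀.hasDerivAt (ha.trans_le hx)) (fun x hx => h.hasDerivAt (ha.trans_le hx))
    (fun x hx => hv₀ x (ha.trans_le hx)) (fun x hx => hN x (le_of_max_le_left hx))
    fun x hx => monotoneOn_weightedWronskian h₀ h hσ.le (fun y hy => (hv₀ y hy).le)
      (fun y hy => hv y hy.le) hε (ha.trans_le hx) (le_of_max_le_right hx)
  exact (hv x (ha.trans_le hxa).le).not_gt hvx

theorem stmt14 (m B σ₀ : ℝ) (hm : 3 < m) (hB : 0 < B) (hσ₀ : 0 < σ₀)
    (v₀ : ℝ → ℝ) (h₀ : RegSol m B σ₀ v₀)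
    (hpos : ∀ ζ : ℝ, 0 ≤ ζ → 0 < v₀ ζ)
    (hdecay : Filter.Tendsto v₀ Filter.atTop (nhds 0)) :
    ∀ σ : ℝ, σ₀ < σ → ∀ v : ℝ → ℝ, RegSol m B σ v →
      ∃ ζ : ℝ, 0 ≤ ζ ∧ v ζ < 0 :=
  stmt14_general m B σ₀ hm v₀ h₀ hpos hdecay
end

section
/- If w : [0,∞) → ℝ is continuously differentiable on [0,∞), twice continuously differentiable on (0,∞), satisfies −ζ·w''(ζ) − w'(ζ)/(m−2) + b(ζ)·w(ζ) = σ₀·w(ζ) for all ζ > 0, and w(ζ) → 0 as ζ → +∞, then there exists λ ∈ ℝ such that w = λ·v_{σ₀}; that is, the eigenspace associated with σ₀ is one-dimensional. -/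
/-!
Wronskian argument. For two solutions of `ζ y'' + p y' = c(ζ) y` with `p = 1/(m-2) > 0`,
Abel's identity makes `ζ ^ p · W` constant on `(0,∞)`, where `W = w v₀' - w' v₀`. Both solutions
are `C¹` up to `ζ = 0`, so `W` stays bounded there and `ζ ^ p · W → 0`; hence `W ≡ 0`. Then
`(w / v₀)' = -W / v₀² = 0`, and as `v₀ > 0` on `[0,∞)`, `w = (w 0 / v₀ 0) · v₀`.
-/

open Filter Set

open Topology

lemma eq_of_hasDerivAt_zero_of_tendsto_nhdsGT {f : ℝ → ℝ} {a L : ℝ}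
    (hf : ∀ x ∈ Ioi a, HasDerivAt f 0 x) (hL : Tendsto f (𝓝[>] a) (𝓝 L)) :
    ∀ x ∈ Ioi a, f x = L := by
  obtain ⟨c, hc⟩ := isOpen_Ioi.exists_is_const_of_deriv_eq_zero isPreconnected_Ioi
    (fun x hx => (hf x hx).differentiableAt.differentiableWithinAt)
    (fun x hx => (hf x hx).deriv)
  have hcL : c = L := tendsto_nhds_unique
    (tendsto_const_nhds.congr' (eventually_nhdsWithin_of_forall fun x hx => (hc x hx).symm)) hL
  exact fun x hx => (hc x hx).trans hcL

lemma hasDerivAt_deriv_of_contDiffOn_two {f : ℝ → ℝ} {s : Set ℝ} (hs : IsOpen s)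
    (hf : ContDiffOn ℝ 2 f s) {x : ℝ} (hx : x ∈ s) :
    HasDerivAt (deriv f) (deriv (deriv f) x) x :=
  (((hf.deriv_of_isOpen hs (m := 1) (by norm_num)).differentiableOn one_ne_zero).differentiableAt
    (hs.mem_nhds hx)).hasDerivAt

noncomputable def wronskian (f g : ℝ → ℝ) (x : ℝ) : ℝ := f x * deriv g x - deriv f x * g x

lemma hasDerivAt_wronskian {f g : ℝ → ℝ} {x : ℝ} (hf : HasDerivAt f (deriv f x) x)
    (hg : HasDerivAt g (deriv g x) x) (hf' : HasDerivAt (deriv f) (deriv (deriv f) x) x)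
    (hg' : HasDerivAt (deriv g) (deriv (deriv g) x) x) :
    HasDerivAt (wronskian f g) (f x * deriv (deriv g) x - deriv (deriv f) x * g x) x :=
  ((hf.mul hg').sub (hf'.mul hg)).congr_deriv (by ring)

lemma tendsto_wronskian_nhdsGT {f g : ℝ → ℝ} {a : ℝ} (hf : ContDiffOn ℝ 1 f (Ici a))
    (hg : ContDiffOn ℝ 1 g (Ici a)) :
    Tendsto (wronskian f g) (𝓝[>] a)
      (𝓝 (f a * derivWithin g (Ici a) a - derivWithin f (Ici a) a * g a)) := by
  have ha : a ∈ Ici a := self_mem_Ici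
  have hcont : ContinuousWithinAt
      (fun x => f x * derivWithin g (Ici a) x - derivWithin f (Ici a) x * g x) (Ici a) a :=
    ((hf.continuousOn a ha).mul (hg.continuousOn_derivWithin (uniqueDiffOn_Ici a) le_rfl a ha)).sub
      ((hf.continuousOn_derivWithin (uniqueDiffOn_Ici a) le_rfl a ha).mul (hg.continuousOn a ha))
  refine (hcont.mono Ioi_subset_Ici_self).tendsto.congr' ?_
  filter_upwards [self_mem_nhdsWithin] with x (hx : a < x)
  simp only [wronskian, derivWithin_of_mem_nhds (Ici_mem_nhds hx)]

section EulerType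

variable {p : ℝ} {c f g : ℝ → ℝ}

lemma hasDerivAt_rpow_mul_wronskian (hf : ContDiffOn ℝ 2 f (Ioi 0))
    (hg : ContDiffOn ℝ 2 g (Ioi 0))
    (hfode : ∀ x > 0, x * deriv (deriv f) x + p * deriv f x = c x * f x)
    (hgode : ∀ x > 0, x * deriv (deriv g) x + p * deriv g x = c x * g x)
    {x : ℝ} (hx : 0 < x) :
    HasDerivAt (fun y => y ^ p * wronskian f g y) 0 x := by
  have hd : ∀ {h : ℝ → ℝ}, ContDiffOn ℝ 2 h (Ioi 0) → HasDerivAt h (deriv h x) x :=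
    fun hh => ((hh.differentiableOn (by norm_num)).differentiableAt
      (isOpen_Ioi.mem_nhds hx)).hasDerivAt
  have hW := hasDerivAt_wronskian (hd hf) (hd hg)
    (hasDerivAt_deriv_of_contDiffOn_two isOpen_Ioi hf hx)
    (hasDerivAt_deriv_of_contDiffOn_two isOpen_Ioi hg hx)
  refine ((Real.hasDerivAt_rpow_const (Or.inl hx.ne')).mul hW).congr_deriv ?_
  have hxp : x ^ p = x ^ (p - 1) * x := by
    rw [← Real.rpow_add_one hx.ne', sub_add_cancel]
  rw [hxp, wronskian]
  linear_combination x ^ (p - 1) * (f x * hgode x hx - g x * hfode x hx)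

lemma wronskian_eq_zero_of_regular (hp : 0 < p) (hf₁ : ContDiffOn ℝ 1 f (Ici 0))
    (hg₁ : ContDiffOn ℝ 1 g (Ici 0)) (hf : ContDiffOn ℝ 2 f (Ioi 0))
    (hg : ContDiffOn ℝ 2 g (Ioi 0))
    (hfode : ∀ x > 0, x * deriv (deriv f) x + p * deriv f x = c x * f x)
    (hgode : ∀ x > 0, x * deriv (deriv g) x + p * deriv g x = c x * g x) :
    ∀ x > 0, wronskian f g x = 0 := by
  have hpow : Tendsto (fun y : ℝ => y ^ p) (𝓝[>] 0) (𝓝 0) := by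
    simpa [Real.zero_rpow hp.ne'] using
      (Real.continuousAt_rpow_const 0 p (Or.inr hp.le)).tendsto.mono_left nhdsWithin_le_nhds
  have hzero := eq_of_hasDerivAt_zero_of_tendsto_nhdsGT
    (fun x hx => hasDerivAt_rpow_mul_wronskian hf hg hfode hgode hx)
    (by simpa using hpow.mul (tendsto_wronskian_nhdsGT hf₁ hg₁))
  intro x hx
  exact (mul_eq_zero.mp (hzero x hx)).resolve_left (Real.rpow_pos_of_pos hx p).ne'

end EulerType

lemma eq_mul_of_wronskian_eq_zero {f g : ℝ → ℝ} {a : ℝ} (hf : ContinuousOn f (Ici a))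
    (hg : ContinuousOn g (Ici a)) (hf' : DifferentiableOn ℝ f (Ioi a))
    (hg' : DifferentiableOn ℝ g (Ioi a)) (hg0 : ∀ x ∈ Ici a, g x ≠ 0)
    (hW : ∀ x ∈ Ioi a, wronskian f g x = 0) :
    ∀ x ∈ Ici a, f x = f a / g a * g x := by
  have hratio : ∀ x ∈ Ioi a, f x / g x = f a / g a := by
    refine eq_of_hasDerivAt_zero_of_tendsto_nhdsGT (fun x hx => ?_) ?_
    · have hd : ∀ {h : ℝ → ℝ}, DifferentiableOn ℝ h (Ioi a) → HasDerivAt h (deriv h x) x :=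
        fun hh => (hh.differentiableAt (isOpen_Ioi.mem_nhds hx)).hasDerivAt
      refine ((hd hf').div (hd hg') (hg0 x (Ioi_subset_Ici_self hx))).congr_deriv ?_
      have hWx := hW x hx
      rw [wronskian] at hWx
      rw [show deriv f x * g x - f x * deriv g x = 0 by linarith, zero_div]
    · exact (((hf a self_mem_Ici).div (hg a self_mem_Ici) (hg0 a self_mem_Ici)).mono
        Ioi_subset_Ici_self).tendsto
  intro x hx
  rcases (mem_Ici.mp hx).eq_or_lt with rfl | hlt
  · rw [div_mul_cancel₀ _ (hg0 a self_mem_Ici)]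
  · rw [← hratio x hlt, div_mul_cancel₀ _ (hg0 x hx)]

theorem stmt16_general (m B σ₀ : ℝ) (hm : 3 < m)
    (v₀ : ℝ → ℝ) (h₀ : RegSol m B σ₀ v₀)
    (hpos : ∀ ζ : ℝ, 0 ≤ ζ → 0 < v₀ ζ) :
    ∀ w : ℝ → ℝ,
      ContDiffOn ℝ 1 w (Set.Ici 0) →
      ContDiffOn ℝ 2 w (Set.Ioi 0) →
      (∀ ζ : ℝ, 0 < ζ →
        -ζ * deriv (deriv w) ζ - deriv w ζ / (m - 2)
          + B * ζ ^ (m / (m - 2)) * w ζ = σ₀ * w ζ) →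
      Filter.Tendsto w Filter.atTop (nhds 0) →
      ∃ lam : ℝ, ∀ ζ : ℝ, 0 ≤ ζ → w ζ = lam * v₀ ζ := by
  intro w hw₁ hw₂ hwode _
  obtain ⟨hv₁, hv₂, hvode, -⟩ := h₀
  have hode : ∀ {u : ℝ → ℝ}, (∀ ζ : ℝ, 0 < ζ →
      -ζ * deriv (deriv u) ζ - deriv u ζ / (m - 2) + B * ζ ^ (m / (m - 2)) * u ζ = σ₀ * u ζ) →
      ∀ ζ > 0, ζ * deriv (deriv u) ζ + 1 / (m - 2) * deriv u ζ
        = (B * ζ ^ (m / (m - 2)) - σ₀) * u ζ :=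
    fun hu ζ hζ => by linear_combination -hu ζ hζ
  have hW := wronskian_eq_zero_of_regular (one_div_pos.mpr (by linarith)) hw₁ hv₁ hw₂ hv₂
    (hode hwode) (hode hvode)
  refine ⟨w 0 / v₀ 0, eq_mul_of_wronskian_eq_zero hw₁.continuousOn hv₁.continuousOn
    (hw₂.differentiableOn (by norm_num)) (hv₂.differentiableOn (by norm_num))
    (fun x hx => (hpos x hx).ne') hW⟩

theorem stmt16 (m B σ₀ : ℝ) (hm : 3 < m) (hB : 0 < B) (hσ₀ : 0 < σ₀)
    (v₀ : ℝ → ℝ) (h₀ : RegSol m B σ₀ v₀)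
    (hpos : ∀ ζ : ℝ, 0 ≤ ζ → 0 < v₀ ζ)
    (hdecay : Filter.Tendsto v₀ Filter.atTop (nhds 0)) :
    ∀ w : ℝ → ℝ,
      ContDiffOn ℝ 1 w (Set.Ici 0) →
      ContDiffOn ℝ 2 w (Set.Ioi 0) →
      (∀ ζ : ℝ, 0 < ζ →
        -ζ * deriv (deriv w) ζ - deriv w ζ / (m - 2)
          + B * ζ ^ (m / (m - 2)) * w ζ = σ₀ * w ζ) →
      Filter.Tendsto w Filter.atTop (nhds 0) →
      ∃ lam : ℝ, ∀ ζ : ℝ, 0 ≤ ζ → w ζ = lam * v₀ ζ :=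
  stmt16_general m B σ₀ hm v₀ h₀ hpos
end
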